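/- Let M be a binary matrix, let c_p and c_q be two columns of M, and let C = {v_1, v_2, v_3, v_4} be an induced cycle of length 4 in the induced subgraph G[vert(c_p) ∪ vert(c_q)] of the derived graph G(M), with corresponding rows r_1, r_2, r_3, r_4. Then every set D of rows of M for which M \ D has the consecutive ones property contains at least one of r_1, r_2, r_3, r_4. -/

import Mathlib

/-- A binary matrix (rows `R`, columns `Fin n`, entries in `Bool`) has the
consecutive ones property: some permutation of the columns makes the ones in
every row consecutive. -/
def HasCOP {R : Type*} {n : ℕ} (M : R → Fin n → Bool) : Prop :=
  ∃ σ : Equiv.Perm (Fin n), ∀ (i : R) (a b c : Fin n), a ≤ b → b ≤ c →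
    M i (σ a) = true → M i (σ c) = true → M i (σ b) = true

/-- The set `S_i` of columns having a `1` in row `i`. -/
def rowSet {R : Type*} {n : ℕ} (M : R → Fin n → Bool) (i : R) : Set (Fin n) :=
  {j | M i j = true}

/-- The set `S_i` of columns having a `1` in row `i`, as a `Finset`. -/
def rowFinset {R : Type*} {n : ℕ} (M : R → Fin n → Bool) (i : R) : Finset (Fin n) :=
  Finset.univ.filter (fun j => M i j = true)

/-- `vert(c_k)`: vertices (rows) having a `1` in column `k`. -/
def vert {R : Type*} {n : ℕ} (M : R → Fin n → Bool) (k : Fin n) : Set R :=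
  {i | M i k = true}

/-- The submatrix `M \ D` obtained by deleting the rows in `D`. -/
def delRows {R : Type*} {n : ℕ} (M : R → Fin n → Bool) (D : Set R) :
    {i : R // i ∉ D} → Fin n → Bool :=
  fun i j => M i.1 j

/-- `M̃`: the `(n+m) × n` matrix obtained by stacking the `n × n` identity
matrix on top of `M`. -/
def augMatrix {m n : ℕ} (M : Fin m → Fin n → Bool) : Fin (n + m) → Fin n → Bool :=
  fun i j => Fin.addCases (fun i' : Fin n => decide (i' = j)) (fun i' : Fin m => M i' j) i

/-- The derived graph `G(M)`: one vertex per row, two distinct rows adjacent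
iff some column has a `1` in both. -/
def derivedGraph {R : Type*} {n : ℕ} (M : R → Fin n → Bool) : SimpleGraph R where
  Adj i j := i ≠ j ∧ ∃ k, M i k = true ∧ M j k = true
  symm := by
    constructor
    rintro i j ⟨hne, k, h1, h2⟩
    exact ⟨hne.symm, k, h2, h1⟩
  loopless := by constructor; rintro i ⟨h, -⟩; exact h rfl

/-- An interval graph: vertices can be assigned nonempty real intervals so
that distinct vertices are adjacent iff their intervals intersect. -/
def IsIntervalGraph {V : Type*} (G : SimpleGraph V) : Prop :=
  ∃ I : V → Set ℝ, (∀ v, (I v).Nonempty ∧ (I v).OrdConnected) ∧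
    ∀ u v : V, u ≠ v → (G.Adj u v ↔ (I u ∩ I v).Nonempty)

/-- A maximal clique: a clique not properly contained in another clique. -/
def IsMaximalClique {V : Type*} (G : SimpleGraph V) (Q : Set V) : Prop :=
  G.IsClique Q ∧ ∀ Q' : Set V, G.IsClique Q' → Q ⊆ Q' → Q' = Q

/-- A maximal clique of the induced subgraph `G[X]` (viewed as a set of
vertices of `G` contained in `X`). -/
def IsMaximalCliqueOn {V : Type*} (G : SimpleGraph V) (X Q : Set V) : Prop :=
  Q ⊆ X ∧ G.IsClique Q ∧ ∀ Q' : Set V, Q' ⊆ X → G.IsClique Q' → Q ⊆ Q' → Q' = Q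

/-- `N` is the clique matrix of `G`: its columns are pairwise distinct and the
column sets are exactly the maximal cliques of `G`. -/
def IsCliqueMatrix {V C : Type*} (G : SimpleGraph V) (N : V → C → Bool) : Prop :=
  Function.Injective (fun j : C => fun i : V => N i j) ∧
  ∀ Q : Set V, IsMaximalClique G Q ↔ ∃ j : C, Q = {i | N i j = true}

/-- An intersection cardinality preserving interval assignment: each row set
`S_i` gets an integer interval `[a i, b i]` with `|S_i ∩ S_j| = |I_i ∩ I_j|`
for all pairs `i, j`. -/
def IsICPIA {m n : ℕ} (M : Fin m → Fin n → Bool) (a b : Fin m → ℤ) : Prop :=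
  ∀ i j : Fin m,
    (rowFinset M i ∩ rowFinset M j).card =
    (Finset.Icc (a i) (b i) ∩ Finset.Icc (a j) (b j)).card

/-- `c` is an induced cycle of length `l` inside the induced subgraph `G[X]`:
`l ≥ 3` distinct vertices of `X`, cyclically consecutive ones adjacent, and
non-consecutive ones non-adjacent. -/
def IsInducedCycleOn {V : Type*} (G : SimpleGraph V) (X : Set V) (l : ℕ) (c : Fin l → V) : Prop :=
  3 ≤ l ∧ Function.Injective c ∧ (∀ i, c i ∈ X) ∧
  ∀ i j : Fin l, i ≠ j →
    (G.Adj (c i) (c j) ↔ (j.val = (i.val + 1) % l ∨ i.val = (j.val + 1) % l))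

/-- `G` has an induced cycle of length 4. -/
def HasInducedC4 {V : Type*} (G : SimpleGraph V) : Prop :=
  ∃ v1 v2 v3 v4 : V, v1 ≠ v2 ∧ v1 ≠ v3 ∧ v1 ≠ v4 ∧ v2 ≠ v3 ∧ v2 ≠ v4 ∧ v3 ≠ v4 ∧
    G.Adj v1 v2 ∧ G.Adj v2 v3 ∧ G.Adj v3 v4 ∧ G.Adj v4 v1 ∧ ¬ G.Adj v1 v3 ∧ ¬ G.Adj v2 v4

/-- A comparability graph: some partial order on the vertices makes distinct
vertices adjacent iff they are comparable. -/
def IsComparabilityGraph {V : Type*} (G : SimpleGraph V) : Prop :=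
  ∃ p : PartialOrder V, ∀ u v : V, u ≠ v → (G.Adj u v ↔ (p.le u v ∨ p.le v u))

/-!
Under a column order witnessing the consecutive ones property, every row becomes an interval of
positions, and two distinct rows are adjacent in the derived graph exactly when their intervals
meet. Intervals of a linear order cannot form an induced 4-cycle: if `s₁ ∩ s₂ ∋ a ≤ b ∈ s₂ ∩ s₃`,
then `s₂ ⊇ [a, b]`, and the points `c ∈ s₃ ∩ s₄`, `d ∈ s₄ ∩ s₁` force a chord wherever they lie
relative to `[a, b]`. Hence the four rows of the cycle cannot all survive in `M \ D`.
-/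

theorem Set.OrdConnected.four_cycle_has_chord {α : Type*} [LinearOrder α]
    {s₁ s₂ s₃ s₄ : Set α} (h₁ : s₁.OrdConnected) (h₂ : s₂.OrdConnected)
    (h₃ : s₃.OrdConnected) (h₄ : s₄.OrdConnected)
    (h₁₂ : (s₁ ∩ s₂).Nonempty) (h₂₃ : (s₂ ∩ s₃).Nonempty)
    (h₃₄ : (s₃ ∩ s₄).Nonempty) (h₄₁ : (s₄ ∩ s₁).Nonempty) :
    (s₁ ∩ s₃).Nonempty ∨ (s₂ ∩ s₄).Nonempty := by
  obtain ⟨a, ha₁, ha₂⟩ := h₁₂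
  obtain ⟨b, hb₂, hb₃⟩ := h₂₃
  obtain ⟨c, hc₃, hc₄⟩ := h₃₄
  obtain ⟨d, hd₄, hd₁⟩ := h₄₁
  wlog hab : a ≤ b generalizing s₁ s₃ a b c d
  · rw [Set.inter_comm s₁]
    exact this h₃ h₁ b hb₃ hb₂ a ha₂ ha₁ d hd₁ hd₄ c hc₄ hc₃ (le_of_not_ge hab)
  by_cases hca : c ≤ a
  · exact .inl ⟨a, ha₁, h₃.out hc₃ hb₃ ⟨hca, hab⟩⟩
  by_cases hbd : b ≤ d
  · exact .inl ⟨b, h₁.out ha₁ hd₁ ⟨hab, hbd⟩, hb₃⟩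
  push Not at hca hbd
  rcases le_total d a with hda | had
  · exact .inr ⟨a, ha₂, h₄.out hd₄ hc₄ ⟨hda, hca.le⟩⟩
  · exact .inr ⟨d, h₂.out ha₂ hb₂ ⟨had, hbd.le⟩, hd₄⟩

section

variable {R : Type*} {n : ℕ} {M : R → Fin n → Bool}

theorem HasCOP.exists_ordConnected_rowSet (hM : HasCOP M) :
    ∃ σ : Equiv.Perm (Fin n), ∀ i, (σ ⁻¹' rowSet M i).OrdConnected := by
  obtain ⟨σ, hσ⟩ := hM
  exact ⟨σ, fun i => ⟨fun a ha c hc b hb => hσ i a b c hb.1 hb.2 ha hc⟩⟩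

theorem derivedGraph_adj_iff_preimage_rowSet (σ : Equiv.Perm (Fin n)) {u w : R} (h : u ≠ w) :
    (derivedGraph M).Adj u w ↔ (σ ⁻¹' rowSet M u ∩ σ ⁻¹' rowSet M w).Nonempty := by
  rw [← Set.preimage_inter, σ.surjective.nonempty_preimage]
  exact and_iff_right h

theorem derivedGraph_delRows_adj {D : Set R} {u w : {i : R // i ∉ D}} :
    (derivedGraph (delRows M D)).Adj u w ↔ (derivedGraph M).Adj u w := by
  simp only [derivedGraph, delRows, ne_eq, Subtype.ext_iff]

theorem HasCOP.not_hasInducedC4 (hM : HasCOP M) : ¬ HasInducedC4 (derivedGraph M) := by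
  rintro ⟨v₁, v₂, v₃, v₄, h₁₂, h₁₃, h₁₄, h₂₃, h₂₄, h₃₄, e₁₂, e₂₃, e₃₄, e₄₁, n₁₃, n₂₄⟩
  obtain ⟨σ, hσ⟩ := hM.exists_ordConnected_rowSet
  have meet := fun {u w : R} (h : u ≠ w) => derivedGraph_adj_iff_preimage_rowSet (M := M) σ h
  rcases (hσ v₁).four_cycle_has_chord (hσ v₂) (hσ v₃) (hσ v₄) ((meet h₁₂).1 e₁₂)
      ((meet h₂₃).1 e₂₃) ((meet h₃₄).1 e₃₄) ((meet h₁₄.symm).1 e₄₁) with h | h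
  · exact n₁₃ ((meet h₁₃).2 h)
  · exact n₂₄ ((meet h₂₄).2 h)

end

theorem stmt15_general {m n : ℕ} (M : Fin m → Fin n → Bool)
    (v1 v2 v3 v4 : Fin m)
    (hne : v1 ≠ v2 ∧ v1 ≠ v3 ∧ v1 ≠ v4 ∧ v2 ≠ v3 ∧ v2 ≠ v4 ∧ v3 ≠ v4)
    (e12 : (derivedGraph M).Adj v1 v2) (e23 : (derivedGraph M).Adj v2 v3)
    (e34 : (derivedGraph M).Adj v3 v4) (e41 : (derivedGraph M).Adj v4 v1)
    (n13 : ¬ (derivedGraph M).Adj v1 v3) (n24 : ¬ (derivedGraph M).Adj v2 v4)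
    (D : Set (Fin m)) (hD : HasCOP (delRows M D)) :
    v1 ∈ D ∨ v2 ∈ D ∨ v3 ∈ D ∨ v4 ∈ D := by
  by_contra! hkeep
  obtain ⟨h1, h2, h3, h4⟩ := hkeep
  obtain ⟨h12, h13, h14, h23, h24, h34⟩ := hne
  refine hD.not_hasInducedC4 ⟨⟨v1, h1⟩, ⟨v2, h2⟩, ⟨v3, h3⟩, ⟨v4, h4⟩, ?_⟩
  simp only [derivedGraph_delRows_adj, ne_eq, Subtype.mk.injEq]
  exact ⟨h12, h13, h14, h23, h24, h34, e12, e23, e34, e41, n13, n24⟩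

/-- Branching rule 2: If `{v_1, v_2, v_3, v_4}` is an induced
cycle of length 4 in `G[vert(c_p) ∪ vert(c_q)]`, then every row-deletion set
`D` giving COP contains one of the four corresponding rows. -/
theorem stmt15 {m n : ℕ} (M : Fin m → Fin n → Bool) (p q : Fin n)
    (v1 v2 v3 v4 : Fin m)
    (hne : v1 ≠ v2 ∧ v1 ≠ v3 ∧ v1 ≠ v4 ∧ v2 ≠ v3 ∧ v2 ≠ v4 ∧ v3 ≠ v4)
    (hmem : v1 ∈ vert M p ∪ vert M q ∧ v2 ∈ vert M p ∪ vert M q ∧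
            v3 ∈ vert M p ∪ vert M q ∧ v4 ∈ vert M p ∪ vert M q)
    (e12 : (derivedGraph M).Adj v1 v2) (e23 : (derivedGraph M).Adj v2 v3)
    (e34 : (derivedGraph M).Adj v3 v4) (e41 : (derivedGraph M).Adj v4 v1)
    (n13 : ¬ (derivedGraph M).Adj v1 v3) (n24 : ¬ (derivedGraph M).Adj v2 v4)
    (D : Set (Fin m)) (hD : HasCOP (delRows M D)) :
    v1 ∈ D ∨ v2 ∈ D ∨ v3 ∈ D ∨ v4 ∈ D :=
  stmt15_general M v1 v2 v3 v4 hne e12 e23 e34 e41 n13 n24 D hD
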